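/- arXiv:1604.00753 — 4 statements merged into one kernel-verified Lean document; each statement's English description precedes it below -/
import Mathlib

section
/- For every positive integer n, the series ∑_{m=1, m≠n}^∞ 1/(m² − n²) converges and equals 3/(4n²). -/
/-!
Partial fractions turn `1 / (m² - n²)` into `((m - n)⁻¹ - (m + 2n - n)⁻¹) / (2n)`, a series that
telescopes with step `2n` to the first `2n` values of `m ↦ (m - n)⁻¹`. These cancel in pairs
`m ↔ 2n - m`, except for `m = 0`, which leaves `-1/n`. Adding back the terms `m = 0` and `m = n`
that the sum omits gives `-1/(2n²) + 1/n² + 1/(4n²) = 3/(4n²)`.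
-/

open Filter Finset Topology

theorem sum_range_sub_shift {M : Type*} [AddCommGroup M] (u : ℕ → M) (k N : ℕ) :
    ∑ m ∈ range N, (u m - u (m + k)) = ∑ i ∈ range k, u i - ∑ i ∈ range k, u (N + i) := by
  have h := (sum_range_add u N k).symm.trans (add_comm N k ▸ sum_range_add u k N)
  simp only [sum_sub_distrib, add_comm _ k]
  exact sub_eq_sub_iff_add_eq_add.mpr h

theorem tendsto_sum_range_sub_shift {M : Type*} [AddCommGroup M] [TopologicalSpace M]
    [IsTopologicalAddGroup M] {u : ℕ → M} (hu : Tendsto u atTop (𝓝 0)) (k : ℕ) :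
    Tendsto (fun N ↦ ∑ m ∈ range N, (u m - u (m + k))) atTop (𝓝 (∑ i ∈ range k, u i)) := by
  simp only [sum_range_sub_shift]
  have htail : Tendsto (fun N ↦ ∑ i ∈ range k, u (N + i)) atTop (𝓝 0) := by
    simpa using tendsto_finsetSum (range k) fun i _ ↦ hu.comp (tendsto_add_atTop_nat i)
  simpa using tendsto_const_nhds.sub htail

theorem hasSum_sub_shift_of_antitone {u : ℕ → ℝ} (N : ℕ) (hanti : Antitone fun m ↦ u (m + N))
    (hu : Tendsto u atTop (𝓝 0)) (k : ℕ) :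
    HasSum (fun m ↦ u m - u (m + k)) (∑ i ∈ range k, u i) := by
  have hsum : Summable fun m ↦ u (m + N) - u (m + k + N) := by
    refine ((hasSum_iff_tendsto_nat_of_nonneg (fun m ↦ ?_) _).mpr
      (tendsto_sum_range_sub_shift (u := fun m ↦ u (m + N)) (hu.comp (tendsto_add_atTop_nat N))
        k)).summable
    exact sub_nonneg.mpr (hanti (Nat.le_add_right m k))
  have hsum' : Summable fun m ↦ u m - u (m + k) :=
    (summable_nat_add_iff N).mp (by simpa only [add_right_comm _ k] using hsum)
  exact hsum'.hasSum_iff_tendsto_nat.mpr (tendsto_sum_range_sub_shift hu k)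

theorem inv_sq_sub_sq_eq {x y : ℝ} (hy : y ≠ 0) (hxy : x - y ≠ 0) (hxy' : x + y ≠ 0) :
    (x ^ 2 - y ^ 2)⁻¹ = (2 * y)⁻¹ * ((x - y)⁻¹ - (x + y)⁻¹) := by
  rw [sq_sub_sq, mul_inv]
  field_simp
  ring

theorem sum_range_inv_natCast_sub (n : ℕ) :
    ∑ i ∈ range (2 * n), ((i : ℝ) - n)⁻¹ = -(n : ℝ)⁻¹ := by
  set u : ℕ → ℝ := fun i ↦ ((i : ℝ) - n)⁻¹
  -- `i ↦ 2n - i` reverses the sign of every term, including the junk term `u n = 0⁻¹ = 0`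
  have hsym : ∑ i ∈ range (2 * n + 1), u i = 0 := by
    have hrefl := sum_range_reflect u (2 * n + 1)
    have hneg : ∀ i ∈ range (2 * n + 1), u (2 * n + 1 - 1 - i) = -u i := by
      intro i hi
      have hi : i ≤ 2 * n := Nat.lt_succ_iff.mp (mem_range.mp hi)
      simp only [u, Nat.add_sub_cancel, Nat.cast_sub hi, ← inv_neg]
      push_cast
      ring
    rw [sum_congr rfl hneg, sum_neg_distrib] at hrefl
    linarith
  rw [sum_range_succ] at hsym
  have h2n : u (2 * n) = (n : ℝ)⁻¹ := by simp only [u]; push_cast; ring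
  linarith

-- at `m = n` the telescoping part has `(m - n)⁻¹ = 0⁻¹ = 0`, so it contributes `-(4n²)⁻¹`
theorem ite_one_div_sq_sub_sq_eq {n : ℕ} (hn : 0 < n) (m : ℕ) :
    (if m = 0 ∨ m = n then 0 else 1 / ((m : ℝ) ^ 2 - (n : ℝ) ^ 2)) =
      (2 * n : ℝ)⁻¹ * (((m : ℝ) - n)⁻¹ - (((m + 2 * n : ℕ) : ℝ) - n)⁻¹) +
        ((if m = 0 then ((n : ℝ) ^ 2)⁻¹ else 0) + (if m = n then (4 * (n : ℝ) ^ 2)⁻¹ else 0)) := by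
  have hn' : (n : ℝ) ≠ 0 := by positivity
  push_cast
  rcases eq_or_ne m 0 with rfl | hm0
  · simp only [true_or, if_true, hn.ne, if_false, Nat.cast_zero, zero_sub, zero_add]
    field_simp
    ring
  rcases eq_or_ne m n with rfl | hmn
  · simp only [or_true, if_true, hm0, if_false]
    field_simp
    ring
  have hmn' : (m : ℝ) - n ≠ 0 := sub_ne_zero.mpr (by exact_mod_cast hmn)
  have hmn'' : (m : ℝ) + n ≠ 0 := by positivity
  simp only [hm0, hmn, or_self, if_false, one_div, add_zero]
  rw [inv_sq_sub_sq_eq hn' hmn' hmn'']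
  ring

/-- For every positive integer `n`, the series `∑_{m ≥ 1, m ≠ n} 1/(m² − n²)`
converges and its sum equals `3/(4n²)`. -/
theorem sum_one_div_sq_sub_sq (n : ℕ) (hn : 0 < n) :
    HasSum (fun m : ℕ => if m = 0 ∨ m = n then 0 else 1 / ((m : ℝ) ^ 2 - (n : ℝ) ^ 2))
      (3 / (4 * (n : ℝ) ^ 2)) := by
  set u : ℕ → ℝ := fun m ↦ ((m : ℝ) - n)⁻¹
  have hanti : Antitone fun m ↦ u (m + (n + 1)) := by
    have h (m : ℕ) : u (m + (n + 1)) = ((m : ℝ) + 1)⁻¹ := by simp only [u]; push_cast; ring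
    intro a b hab
    simp only [h]
    gcongr
  have hu : Tendsto u atTop (𝓝 0) :=
    tendsto_inv_atTop_zero.comp (tendsto_atTop_add_const_right _ _ tendsto_natCast_atTop_atTop)
  have htel := hasSum_sub_shift_of_antitone (n + 1) hanti hu (2 * n)
  rw [sum_range_inv_natCast_sub] at htel
  have hsum := (htel.mul_left (2 * n : ℝ)⁻¹).add
    ((hasSum_ite_eq 0 ((n : ℝ) ^ 2)⁻¹).add (hasSum_ite_eq n (4 * (n : ℝ) ^ 2)⁻¹))
  have hval : (2 * n : ℝ)⁻¹ * -(n : ℝ)⁻¹ + (((n : ℝ) ^ 2)⁻¹ + (4 * (n : ℝ) ^ 2)⁻¹) =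
      3 / (4 * (n : ℝ) ^ 2) := by
    field_simp
    ring
  exact hval ▸ hsum.congr_fun (ite_one_div_sq_sub_sq_eq hn)
end

section
/- For every positive integer n, the series ∑_{m=1, m≠n}^∞ 1/(m(m² − n²)) converges and equals 5/(4n³) − H_n/n², where H_n = 1 + 1/2 + ⋯ + 1/n is the n-th harmonic number. -/
/-!
Partial fractions give `1/(m(m² - n²)) = (1/(m - n) - 2/m + 1/(m + n)) / (2n²)`, a second
difference with step `n` of `m ↦ 1/(m - n)`. Each of the two first differences telescopes:
`∑ (1/(m - n) - 1/m) = -H_n` and `∑ (1/m - 1/(m + n)) = H_{n-1}`, so the whole series sums to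
`(1/n - 2H_n)/(2n²)`. With `1/0 = 0` the partial-fraction expression vanishes at `m = 0`, and at
`m = n` it equals `-3/(4n³)`; removing that term gives `5/(4n³) - H_n/n²`.
-/

open Finset Filter Topology

theorem Finset.sum_range_sub_add_eq {G : Type*} [AddCommGroup G] (u : ℕ → G) (K n : ℕ) :
    ∑ k ∈ range K, (u k - u (k + n)) = ∑ i ∈ range n, u i - ∑ i ∈ range n, u (K + i) := by
  have h := (sum_range_add u n K).symm.trans ((add_comm n K).symm ▸ sum_range_add u K n)
  rw [sum_sub_distrib, eq_sub_iff_add_eq, sub_add_eq_add_sub, sub_eq_iff_eq_add]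
  simpa only [add_comm _ n] using h.symm

theorem tendsto_sum_range_sub_add {G : Type*} [AddCommGroup G] [TopologicalSpace G]
    [IsTopologicalAddGroup G] {u : ℕ → G} (h0 : Tendsto u atTop (𝓝 0)) (n : ℕ) :
    Tendsto (fun K ↦ ∑ k ∈ range K, (u k - u (k + n))) atTop (𝓝 (∑ i ∈ range n, u i)) := by
  simp_rw [sum_range_sub_add_eq]
  have : Tendsto (fun K ↦ ∑ i ∈ range n, u (K + i)) atTop (𝓝 0) := by
    simpa using tendsto_finsetSum (range n) fun i _ ↦ h0.comp (tendsto_add_atTop_nat i)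
  simpa using tendsto_const_nhds.sub this

theorem Antitone.hasSum_sub_add {u : ℕ → ℝ} (hu : Antitone u) (h0 : Tendsto u atTop (𝓝 0))
    (n : ℕ) : HasSum (fun k ↦ u k - u (k + n)) (∑ i ∈ range n, u i) :=
  (hasSum_iff_tendsto_nat_of_nonneg (fun k ↦ sub_nonneg.2 (hu (k.le_add_right n))) _).2
    (tendsto_sum_range_sub_add h0 n)

theorem hasSum_sub_add_of_antitone_nat_add {u : ℕ → ℝ} (N n : ℕ)
    (hu : Antitone fun k ↦ u (k + N)) (h0 : Tendsto (fun k ↦ u (k + N)) atTop (𝓝 0)) :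
    HasSum (fun k ↦ u k - u (k + n)) (∑ i ∈ range n, u i) := by
  rw [← hasSum_nat_add_iff' N, sum_range_sub_add_eq, sub_sub_cancel]
  simpa only [add_comm N, add_right_comm _ n N] using hu.hasSum_sub_add h0 n

theorem one_div_mul_sq_sub_sq {K : Type*} [Field K] [NeZero (2 : K)] {x y : K} (hx : x ≠ 0)
    (hy : y ≠ 0) (hxy : x - y ≠ 0) (hxy' : x + y ≠ 0) :
    1 / (x * (x ^ 2 - y ^ 2)) = (1 / (x - y) - 2 / x + 1 / (x + y)) / (2 * y ^ 2) := by
  rw [sq_sub_sq]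
  field_simp
  ring

theorem sum_range_one_div_natCast_sub (n : ℕ) :
    ∑ i ∈ range n, 1 / ((i : ℝ) - n) = -harmonic n := by
  rw [← sum_range_reflect, harmonic, Rat.cast_sum, ← sum_neg_distrib]
  refine sum_congr rfl fun i hi ↦ ?_
  have hi : i < n := mem_range.1 hi
  rw [Nat.cast_sub (by omega), Nat.cast_sub (by omega)]
  push_cast
  rw [show (n : ℝ) - 1 - i - n = -(i + 1) by ring, one_div, inv_neg]

-- The `i = 0` term is `1 / 0 = 0`.
theorem sum_range_succ_one_div_natCast (n : ℕ) :
    ∑ i ∈ range (n + 1), 1 / (i : ℝ) = harmonic n := by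
  simp [sum_range_succ', harmonic]

theorem antitone_one_div_natCast_add_one : Antitone fun k : ℕ ↦ 1 / ((k : ℝ) + 1) :=
  fun _ _ h ↦ one_div_le_one_div_of_le (by positivity) (by simpa using h)

theorem hasSum_one_div_sub_sub_two_div_add (n : ℕ) :
    HasSum (fun m : ℕ ↦ 1 / ((m : ℝ) - n) - 2 / m + 1 / (m + n)) (1 / n - 2 * harmonic n) := by
  have hshift :
      (fun k : ℕ ↦ 1 / (((k + (n + 1) : ℕ) : ℝ) - n)) = fun k : ℕ ↦ 1 / ((k : ℝ) + 1) := by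
    funext k
    push_cast
    ring
  have h1 := hasSum_sub_add_of_antitone_nat_add (u := fun m : ℕ ↦ 1 / ((m : ℝ) - n)) (n + 1) n
    (hshift ▸ antitone_one_div_natCast_add_one)
    (hshift ▸ tendsto_one_div_add_atTop_nhds_zero_nat)
  have h2 := hasSum_sub_add_of_antitone_nat_add (u := fun m : ℕ ↦ 1 / (m : ℝ)) 1 n
    (by simpa using antitone_one_div_natCast_add_one)
    (by simpa using tendsto_one_div_add_atTop_nhds_zero_nat (𝕜 := ℝ))
  have hsum : ∑ i ∈ range n, 1 / (i : ℝ) = harmonic n - 1 / n := by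
    rw [← sum_range_succ_one_div_natCast, sum_range_succ, add_sub_cancel_right]
  rw [sum_range_one_div_natCast_sub] at h1
  rw [hsum] at h2
  rw [show 1 / (n : ℝ) - 2 * harmonic n = -harmonic n - (harmonic n - 1 / n) by ring]
  refine (h1.sub h2).congr_fun fun m ↦ ?_
  push_cast
  ring

/-- For every positive integer `n`, the series `∑_{m ≥ 1, m ≠ n} 1/(m(m² − n²))`
converges and its sum equals `5/(4n³) − H_n/n²`, where `H_n` is the n-th harmonic number. -/
theorem sum_one_div_mul_sq_sub_sq (n : ℕ) (hn : 0 < n) :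
    HasSum (fun m : ℕ => if m = 0 ∨ m = n then 0
        else 1 / ((m : ℝ) * ((m : ℝ) ^ 2 - (n : ℝ) ^ 2)))
      (5 / (4 * (n : ℝ) ^ 3) - (harmonic n : ℝ) / (n : ℝ) ^ 2) := by
  have hn₀ : (n : ℝ) ≠ 0 := Nat.cast_ne_zero.2 hn.ne'
  set g : ℕ → ℝ := fun m ↦ (1 / ((m : ℝ) - n) - 2 / m + 1 / (m + n)) / (2 * n ^ 2)
  have hg : HasSum g ((1 / n - 2 * harmonic n) / (2 * n ^ 2)) :=
    (hasSum_one_div_sub_sub_two_div_add n).div_const _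
  have hf : (fun m : ℕ ↦ if m = 0 ∨ m = n then 0
      else 1 / ((m : ℝ) * ((m : ℝ) ^ 2 - (n : ℝ) ^ 2))) = Function.update g n 0 := by
    funext m
    rcases eq_or_ne m n with rfl | hmn
    · simp
    rw [Function.update_of_ne hmn]
    rcases eq_or_ne m 0 with rfl | hm₀
    · simp [g]
    have hm : (m : ℝ) ≠ 0 := Nat.cast_ne_zero.2 hm₀
    rw [if_neg (by tauto), one_div_mul_sq_sub_sq hm hn₀ (sub_ne_zero.2 (by exact_mod_cast hmn))
      (by positivity)]
  rw [hf, show 5 / (4 * (n : ℝ) ^ 3) - harmonic n / n ^ 2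
    = 0 - g n + (1 / n - 2 * harmonic n) / (2 * n ^ 2) by simp [g]; field_simp; ring]
  exact hg.update n 0
end

section
/- The zeroth Fourier cosine coefficient of x·Cl₂(2πx) on (0,1) satisfies 2·∫₀¹ x·Cl₂(2πx) dx = −ζ(3)/π, where Cl₂(θ) = ∑_{k=1}^∞ sin(kθ)/k² is the Clausen function. -/
/-!
Expanding `Cl₂(2πx) = ∑ sin(2πkx)/k²`, the series is dominated by `∑ 1/k²`, so it may be
integrated termwise against `x` over `[0, 1]`. Since `∫₀¹ x sin(2πkx) dx = -1/(2πk)`, this gives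
`2 ∫₀¹ x Cl₂(2πx) dx = -(1/π) ∑ 1/k³ = -ζ(3)/π`.
-/

open Real

/-- The Clausen function `Cl₂(θ) = ∑_{k=1}^∞ sin(kθ)/k²`. -/
noncomputable def Cl2 (θ : ℝ) : ℝ := ∑' k : ℕ, Real.sin ((k + 1) * θ) / ((k : ℝ) + 1) ^ 2

lemma summable_one_div_nat_add_one_pow {k : ℕ} (hk : 1 < k) :
    Summable fun n : ℕ => 1 / ((n : ℝ) + 1) ^ k := by
  simpa using (summable_nat_add_iff 1).mpr (summable_one_div_nat_pow.mpr hk)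

lemma hasSum_one_div_nat_add_one_pow_riemannZeta_re {k : ℕ} (hk : 1 < k) :
    HasSum (fun n : ℕ => 1 / ((n : ℝ) + 1) ^ k) (riemannZeta k).re := by
  convert (summable_one_div_nat_add_one_pow hk).hasSum
  rw [zeta_eq_tsum_one_div_nat_add_one_cpow (by norm_cast)]
  simp only [Complex.cpow_natCast]
  rw [← Complex.ofReal_re (∑' n : ℕ, 1 / ((n : ℝ) + 1) ^ k), Complex.ofReal_tsum]
  push_cast
  rfl

lemma integral_mul_sin_mul {a : ℝ} (ha : a ≠ 0) :
    ∫ x in (0:ℝ)..1, x * sin (a * x) = sin a / a ^ 2 - cos a / a := by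
  have hderiv (x : ℝ) : HasDerivAt (fun x => sin (a * x) / a ^ 2 - x * cos (a * x) / a)
      (x * sin (a * x)) x := by
    have hax : HasDerivAt (fun x => a * x) a x := by simpa using (hasDerivAt_id x).const_mul a
    have h : HasDerivAt (fun x => sin (a * x) / a ^ 2 - x * cos (a * x) / a)
        (cos (a * x) * a / a ^ 2 - (1 * cos (a * x) + x * (-sin (a * x) * a)) / a) x :=
      (hax.sin.div_const (a ^ 2)).sub (((hasDerivAt_id' x).mul hax.cos).div_const a)
    convert h using 1
    field_simp
    ring
  rw [intervalIntegral.integral_eq_sub_of_hasDerivAt (fun x _ => hderiv x)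
    (Continuous.intervalIntegrable (by fun_prop) _ _)]
  simp

lemma integral_mul_sin_nat_mul_two_pi_mul {n : ℕ} (hn : n ≠ 0) :
    ∫ x in (0:ℝ)..1, x * sin (n * (2 * π * x)) = -(2 * π * n)⁻¹ := by
  have harg (x : ℝ) : n * (2 * π * x) = n * (2 * π) * x := by ring
  simp_rw [harg]
  rw [integral_mul_sin_mul (by positivity), sin_periodic.nat_mul_eq, sin_zero, cos_nat_mul_two_pi]
  ring

lemma norm_sin_mul_div_sq_le (k : ℕ) (θ : ℝ) :
    ‖sin ((k + 1) * θ) / ((k : ℝ) + 1) ^ 2‖ ≤ 1 / ((k : ℝ) + 1) ^ 2 := by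
  rw [norm_div, norm_pow, Real.norm_of_nonneg (by positivity : (0:ℝ) ≤ k + 1)]
  gcongr
  exact abs_sin_le_one _

lemma hasSum_Cl2 (θ : ℝ) :
    HasSum (fun k : ℕ => sin ((k + 1) * θ) / ((k : ℝ) + 1) ^ 2) (Cl2 θ) :=
  (Summable.of_norm_bounded (summable_one_div_nat_add_one_pow one_lt_two)
    (norm_sin_mul_div_sq_le · θ)).hasSum

theorem hasSum_intervalIntegral_mul_Cl2 {g θ : ℝ → ℝ} (hg : Continuous g) (hθ : Continuous θ)
    (a b : ℝ) :
    HasSum (fun k : ℕ => ∫ x in a..b, g x * (sin ((k + 1) * θ x) / ((k : ℝ) + 1) ^ 2))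
      (∫ x in a..b, g x * Cl2 (θ x)) := by
  refine intervalIntegral.hasSum_integral_of_dominated_convergence
    (fun k x => ‖g x‖ * (1 / ((k : ℝ) + 1) ^ 2))
    (fun k => (by fun_prop : Continuous _).aestronglyMeasurable) ?_ ?_ ?_ ?_
  · refine fun k => .of_forall fun x _ => ?_
    rw [norm_mul]
    exact mul_le_mul_of_nonneg_left (norm_sin_mul_div_sq_le k (θ x)) (norm_nonneg _)
  · exact .of_forall fun x _ => (summable_one_div_nat_add_one_pow one_lt_two).mul_left _
  · simp_rw [tsum_mul_left]
    exact (by fun_prop : Continuous _).intervalIntegrable _ _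
  · exact .of_forall fun x _ => (hasSum_Cl2 (θ x)).mul_left (g x)

lemma integral_mul_sin_nat_succ_mul_two_pi_div_sq (k : ℕ) :
    ∫ x in (0:ℝ)..1, x * (sin ((k + 1) * (2 * π * x)) / ((k : ℝ) + 1) ^ 2) =
      -(2 * π)⁻¹ * (1 / ((k : ℝ) + 1) ^ 3) := by
  simp_rw [← mul_div_assoc]
  rw [intervalIntegral.integral_div]
  have := integral_mul_sin_nat_mul_two_pi_mul k.succ_ne_zero
  push_cast at this
  rw [this]
  field_simp

/-- The zeroth Fourier cosine coefficient of `x·Cl₂(2πx)` on `(0,1)`: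
`2·∫₀¹ x·Cl₂(2πx) dx = −ζ(3)/π`. -/
theorem fourier_cos_coeff_zero_x_mul_Cl2 :
    2 * ∫ x in (0:ℝ)..1, x * Cl2 (2 * π * x) = -((riemannZeta 3).re) / π := by
  have hζ : HasSum (fun k : ℕ => 1 / ((k : ℝ) + 1) ^ 3) (riemannZeta 3).re := by
    exact_mod_cast hasSum_one_div_nat_add_one_pow_riemannZeta_re (k := 3) (by norm_num)
  have h := hasSum_intervalIntegral_mul_Cl2 continuous_id (continuous_const_mul (2 * π)) 0 1
  simp only [id, integral_mul_sin_nat_succ_mul_two_pi_div_sq] at h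
  rw [h.unique (hζ.mul_left _)]
  field_simp
end

section
/- ∫₀¹ x²·log(sin(πx)) dx = −(1/3)·log 2 − ζ(3)/(2π²). -/
/-!
For `|r| < 1`, expanding `-log (1 - r e^{iθ})` gives
`log (1 - 2 r cos θ + r²) = -2 ∑ rⁿ cos (nθ) / n`, and `∫₀¹ x² cos (2πnx) dx = 1 / (2π²n²)`,
so `∫₀¹ x² log (1 - 2 r cos 2πx + r²) dx = -(1/π²) ∑ rⁿ / n³`.
Let `r → 1⁻`: on the left `1 - 2 cos 2πx + 1 = 4 sin² πx` and dominated convergence applies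
(the logarithm is bounded by `|log sin πx|` up to constants); on the right Abel's theorem gives
`ζ(3)`.
-/

open Real Set Filter Topology intervalIntegral Interval
open MeasureTheory (volume ae_of_all)

lemma hasSum_pow_mul_cos_div {r : ℝ} (hr : |r| < 1) (θ : ℝ) :
    HasSum (fun n : ℕ => r ^ n * cos (n * θ) / n)
      (-(1 / 2) * log (1 - 2 * r * cos θ + r ^ 2)) := by
  set z : ℂ := r * Complex.exp (θ * Complex.I)
  have hz : ‖z‖ < 1 := by simpa [z] using hr
  have hnormSq : Complex.normSq (1 - z) = 1 - 2 * r * cos θ + r ^ 2 := by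
    simp only [z, Complex.normSq_apply, Complex.sub_re, Complex.sub_im, Complex.one_re,
      Complex.one_im, Complex.re_ofReal_mul, Complex.im_ofReal_mul,
      Complex.exp_ofReal_mul_I_re, Complex.exp_ofReal_mul_I_im]
    linear_combination r ^ 2 * sin_sq_add_cos_sq θ
  have hlog : (-Complex.log (1 - z)).re = -(1 / 2) * log (1 - 2 * r * cos θ + r ^ 2) := by
    rw [Complex.neg_re, Complex.log_re, ← hnormSq, Complex.normSq_eq_norm_sq, log_pow]
    push_cast
    ring
  refine hlog ▸ (Complex.hasSum_re (Complex.hasSum_taylorSeries_neg_log hz)).congr_fun fun n => ?_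
  rw [Complex.div_natCast_re, mul_pow, ← Complex.ofReal_pow, ← Complex.exp_nat_mul,
    ← mul_assoc, ← Complex.ofReal_natCast, ← Complex.ofReal_mul, Complex.re_ofReal_mul,
    Complex.exp_ofReal_mul_I_re]

lemma abs_pow_mul_cos_div_le (r θ : ℝ) (n : ℕ) : |r ^ n * cos θ / n| ≤ |r| ^ n := by
  rcases eq_or_ne n 0 with rfl | hn
  · simp
  have hn1 : (1 : ℝ) ≤ n := Nat.one_le_cast.mpr (Nat.one_le_iff_ne_zero.mpr hn)
  rw [abs_div, abs_mul, abs_pow, Nat.abs_cast]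
  exact div_le_of_le_mul₀ n.cast_nonneg (by positivity) <| by
    nlinarith [abs_cos_le_one θ, pow_nonneg (abs_nonneg r) n]

lemma integral_sq_mul_cos {a : ℝ} (ha : a ≠ 0) :
    ∫ x in (0 : ℝ)..1, x ^ 2 * cos (a * x)
      = sin a / a + 2 * cos a / a ^ 2 - 2 * sin a / a ^ 3 := by
  have hderiv : ∀ x : ℝ, HasDerivAt
      (fun x => x ^ 2 * sin (a * x) / a + 2 * x * cos (a * x) / a ^ 2 - 2 * sin (a * x) / a ^ 3)
      (x ^ 2 * cos (a * x)) x := by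
    intro x
    have hlin : HasDerivAt (fun x => a * x) a x := by simpa using (hasDerivAt_id x).const_mul a
    have hsin := (hasDerivAt_sin (a * x)).comp x hlin
    have hcos := (hasDerivAt_cos (a * x)).comp x hlin
    refine ((((hasDerivAt_pow 2 x).mul hsin).div_const a).add
      ((((hasDerivAt_id x).const_mul 2).mul hcos).div_const (a ^ 2)) |>.sub
      ((hsin.const_mul 2).div_const (a ^ 3))).congr_deriv ?_
    simp only [Function.comp_apply, id]
    field_simp
    ring
  rw [integral_eq_sub_of_hasDerivAt (fun x _ => hderiv x) (Continuous.intervalIntegrable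
    (by fun_prop) 0 1)]
  simp

lemma integral_sq_mul_pow_mul_cos_div (r : ℝ) (n : ℕ) :
    ∫ x in (0 : ℝ)..1, x ^ 2 * (r ^ n * cos (n * (2 * π * x)) / n)
      = 1 / (2 * π ^ 2) * (1 / (n : ℝ) ^ 3 * r ^ n) := by
  rcases eq_or_ne n 0 with rfl | hn
  · simp
  have hn' : (n : ℝ) ≠ 0 := Nat.cast_ne_zero.mpr hn
  have ha : 2 * π * n ≠ 0 := by positivity
  simp_rw [show ∀ x : ℝ, x ^ 2 * (r ^ n * cos (n * (2 * π * x)) / n)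
      = r ^ n / n * (x ^ 2 * cos (2 * π * n * x)) from fun x => by ring_nf]
  rw [integral_const_mul, integral_sq_mul_cos ha,
    show 2 * π * n = (2 * n : ℕ) * π by push_cast; ring, sin_nat_mul_pi,
    show ((2 * n : ℕ) : ℝ) * π = n * (2 * π) by push_cast; ring, cos_nat_mul_two_pi]
  field_simp
  ring

lemma norm_sq_mul_le_abs_of_mem_uIoc {x : ℝ} (hx : x ∈ Ι (0 : ℝ) 1) (c : ℝ) :
    ‖x ^ 2 * c‖ ≤ |c| := by
  rw [uIoc_of_le zero_le_one] at hx
  rw [norm_mul, norm_pow, Real.norm_eq_abs, abs_of_pos hx.1]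
  exact mul_le_of_le_one_left (abs_nonneg c) (pow_le_one₀ hx.1.le hx.2)

lemma integral_sq_mul_log_one_sub_two_mul_cos_add_sq {r : ℝ} (hr : |r| < 1) :
    ∫ x in (0 : ℝ)..1, x ^ 2 * log (1 - 2 * r * cos (2 * π * x) + r ^ 2)
      = -(1 / π ^ 2) * ∑' n : ℕ, 1 / (n : ℝ) ^ 3 * r ^ n := by
  have hsum : HasSum (fun n : ℕ => 1 / (2 * π ^ 2) * (1 / (n : ℝ) ^ 3 * r ^ n))
      (∫ x in (0 : ℝ)..1, x ^ 2 * (-(1 / 2) * log (1 - 2 * r * cos (2 * π * x) + r ^ 2))) := by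
    simp_rw [← integral_sq_mul_pow_mul_cos_div]
    exact hasSum_integral_of_dominated_convergence (fun n _ => |r| ^ n)
      (fun n => (by fun_prop : Continuous _).aestronglyMeasurable)
      (fun n => ae_of_all _ fun x hx =>
        (norm_sq_mul_le_abs_of_mem_uIoc hx _).trans (abs_pow_mul_cos_div_le _ _ _))
      (ae_of_all _ fun _ _ => summable_geometric_of_lt_one (abs_nonneg r) hr)
      intervalIntegrable_const
      (ae_of_all _ fun x _ => (hasSum_pow_mul_cos_div hr _).mul_left (x ^ 2))
  have hhalf : ∫ x in (0 : ℝ)..1, x ^ 2 * (-(1 / 2) * log (1 - 2 * r * cos (2 * π * x) + r ^ 2))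
      = -(1 / 2) * ∫ x in (0 : ℝ)..1, x ^ 2 * log (1 - 2 * r * cos (2 * π * x) + r ^ 2) := by
    rw [← integral_const_mul]
    congr 1 with x
    ring
  have h := hsum.tsum_eq
  rw [tsum_mul_left, hhalf] at h
  linear_combination 2 * h

lemma one_sub_two_mul_cos_two_mul_add_sq (r y : ℝ) :
    1 - 2 * r * cos (2 * y) + r ^ 2 = (1 - r) ^ 2 + 4 * r * sin y ^ 2 := by
  rw [cos_two_mul, cos_sq']
  ring

lemma abs_log_one_sub_two_mul_cos_two_mul_add_sq_le {r y : ℝ} (hr : 1 / 2 ≤ r) (hr1 : r ≤ 1)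
    (hy : sin y ≠ 0) :
    |log (1 - 2 * r * cos (2 * y) + r ^ 2)| ≤ 3 * log 2 + 2 * |log (sin y)| := by
  have hsin : 0 < sin y ^ 2 := by positivity
  have hlower : 2 * sin y ^ 2 ≤ 1 - 2 * r * cos (2 * y) + r ^ 2 := by
    rw [one_sub_two_mul_cos_two_mul_add_sq]
    nlinarith [sq_nonneg (1 - r)]
  have hupper : 1 - 2 * r * cos (2 * y) + r ^ 2 ≤ 2 ^ 2 := by
    rw [one_sub_two_mul_cos_two_mul_add_sq]
    nlinarith [sin_sq_le_one y]
  have hlog := abs_le_max_abs_abs (log_le_log (mul_pos two_pos hsin) hlower)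
    (log_le_log ((mul_pos two_pos hsin).trans_le hlower) hupper)
  rw [log_mul two_ne_zero hsin.ne', log_pow, log_pow, Nat.cast_ofNat,
    abs_of_nonneg (by positivity : 0 ≤ 2 * log 2)] at hlog
  have hlog2 : 0 ≤ log 2 := log_nonneg one_le_two
  refine hlog.trans (max_le (abs_le.mpr ⟨?_, ?_⟩) ?_) <;>
    linarith [neg_abs_le (log (sin y)), le_abs_self (log (sin y))]

lemma intervalIntegrable_log_sin_pi_mul {a b : ℝ} :
    IntervalIntegrable (fun x => log (sin (π * x))) volume a b := by
  simpa [pi_ne_zero] using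
    (intervalIntegrable_log_sin (a := π * a) (b := π * b)).comp_mul_left (c := π)

lemma tendsto_integral_sq_mul_log_one_sub_two_mul_cos_add_sq :
    Tendsto (fun r => ∫ x in (0 : ℝ)..1, x ^ 2 * log (1 - 2 * r * cos (2 * π * x) + r ^ 2))
      (𝓝[<] 1) (𝓝 (∫ x in (0 : ℝ)..1, x ^ 2 * (2 * log 2 + 2 * log (sin (π * x))))) := by
  have hsin : ∀ x ∈ Ioo (0 : ℝ) 1, sin (π * x) ≠ 0 := fun x hx =>
    (sin_pos_of_pos_of_lt_pi (by nlinarith [pi_pos, hx.1]) (by nlinarith [pi_pos, hx.2])).ne'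
  -- `x = 1` has to be discarded: there `1 - 2 r cos 2πx + r² = (1 - r)²` is not bounded below.
  have hIoo : ∀ᵐ x ∂volume, x ∈ Ι (0 : ℝ) 1 → x ∈ Ioo (0 : ℝ) 1 := by
    filter_upwards [volume.ae_ne 1] with x hx1 hx
    rw [uIoc_of_le zero_le_one] at hx
    exact ⟨hx.1, lt_of_le_of_ne hx.2 hx1⟩
  simp_rw [mul_assoc 2 π]
  refine tendsto_integral_filter_of_dominated_convergence
    (fun x => 3 * log 2 + 2 * |log (sin (π * x))|)
    (Eventually.of_forall fun r => (by fun_prop : Measurable _).aestronglyMeasurable) ?_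
    (intervalIntegrable_const.add (intervalIntegrable_log_sin_pi_mul.abs.const_mul 2)) ?_
  · filter_upwards [Ioo_mem_nhdsLT (show (1 / 2 : ℝ) < 1 by norm_num)] with r hr
    filter_upwards [hIoo] with x hx hxI
    exact (norm_sq_mul_le_abs_of_mem_uIoc hxI _).trans
      (abs_log_one_sub_two_mul_cos_two_mul_add_sq_le hr.1.le hr.2.le (hsin x (hx hxI)))
  · filter_upwards [hIoo] with x hx hxI
    have hsin_ne := hsin x (hx hxI)
    have hcont : ContinuousAt
        (fun r => x ^ 2 * log (1 - 2 * r * cos (2 * (π * x)) + r ^ 2)) 1 := by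
      refine continuousAt_const.mul (ContinuousAt.log (by fun_prop) ?_)
      rw [one_sub_two_mul_cos_two_mul_add_sq]
      simpa using hsin_ne
    convert hcont.tendsto.mono_left nhdsWithin_le_nhds using 2
    rw [one_sub_two_mul_cos_two_mul_add_sq, sub_self,
      show (0 : ℝ) ^ 2 + 4 * 1 * sin (π * x) ^ 2 = (2 * sin (π * x)) ^ 2 by ring,
      log_pow, log_mul two_ne_zero hsin_ne]
    push_cast
    ring

lemma integral_sq_mul_two_mul_log_two_add_two_mul_log_sin :
    ∫ x in (0 : ℝ)..1, x ^ 2 * (2 * log 2 + 2 * log (sin (π * x)))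
      = 2 / 3 * log 2 + 2 * ∫ x in (0 : ℝ)..1, x ^ 2 * log (sin (π * x)) := by
  have hI : IntervalIntegrable (fun x => x ^ 2 * log (sin (π * x))) volume 0 1 :=
    intervalIntegrable_log_sin_pi_mul.continuousOn_mul (by fun_prop)
  simp_rw [show ∀ x : ℝ, x ^ 2 * (2 * log 2 + 2 * log (sin (π * x)))
      = 2 * log 2 * x ^ 2 + 2 * (x ^ 2 * log (sin (π * x))) from fun x => by ring]
  rw [integral_add ((continuous_pow 2).intervalIntegrable 0 1 |>.const_mul _) (hI.const_mul 2),
    integral_const_mul, integral_const_mul, integral_pow]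
  norm_num
  ring

lemma re_riemannZeta_natCast {k : ℕ} (hk : 1 < k) :
    (riemannZeta k).re = ∑' n : ℕ, 1 / (n : ℝ) ^ k := by
  rw [zeta_nat_eq_tsum_of_gt_one hk, ← Complex.ofReal_re (∑' n : ℕ, 1 / (n : ℝ) ^ k),
    Complex.ofReal_tsum]
  push_cast
  rfl

/-- `∫₀¹ x²·log(sin(πx)) dx = −(1/3)·log 2 − ζ(3)/(2π²)`. -/
theorem integral_xsq_log_sin :
    ∫ x in (0:ℝ)..1, x ^ 2 * Real.log (Real.sin (π * x)) =
      -(1 / 3) * Real.log 2 - (riemannZeta 3).re / (2 * π ^ 2) := by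
  have hζ : (riemannZeta 3).re = ∑' n : ℕ, 1 / (n : ℝ) ^ 3 := by
    exact_mod_cast re_riemannZeta_natCast (k := 3) (by norm_num)
  have hAbel : Tendsto (fun r => ∑' n : ℕ, 1 / (n : ℝ) ^ 3 * r ^ n) (𝓝[<] 1)
      (𝓝 (riemannZeta 3).re) :=
    hζ ▸ Real.tendsto_tsum_powerSeries_nhdsWithin_lt
      (summable_one_div_nat_pow.mpr (by norm_num)).hasSum.tendsto_sum_nat
  have hseries : Tendsto
      (fun r => ∫ x in (0 : ℝ)..1, x ^ 2 * log (1 - 2 * r * cos (2 * π * x) + r ^ 2))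
      (𝓝[<] 1) (𝓝 (-(1 / π ^ 2) * (riemannZeta 3).re)) := by
    refine (hAbel.const_mul _).congr' ?_
    filter_upwards [Ioo_mem_nhdsLT (show (-1 : ℝ) < 1 by norm_num)] with r hr
    exact (integral_sq_mul_log_one_sub_two_mul_cos_add_sq (abs_lt.mpr hr)).symm
  have hlim := tendsto_nhds_unique tendsto_integral_sq_mul_log_one_sub_two_mul_cos_add_sq hseries
  rw [integral_sq_mul_two_mul_log_two_add_two_mul_log_sin] at hlim
  linear_combination hlim / 2
end
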